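/- arXiv:2408.00566 — 2 statements merged into one kernel-verified Lean document; each statement's English description precedes it below -/
import Mathlib

section
/- Let S = {1, …, n} be a finite nonempty set and let σ, τ : S → S be self-maps. Then there exists a positive integer s such that, writing σ' = σ^s and τ' = τ^s, there exists an element i ∈ S and an integer t ≥ 0 satisfying: (1) σ'(i) = i; (2) τ'(j) = j, where j = τ'(i); and (3) (σ' ∘ (τ' ∘ σ')^t)(j) = i. -/
lemma iter_idem (n : ℕ) (f : Fin n → Fin n) (hn : 0 < n) (x : Fin n) :
    f^[n.factorial] (f^[n.factorial] x) = f^[n.factorial] x := by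
  obtain ⟨k, l, hkl, heq⟩ := Fintype.exists_ne_map_eq_of_card_lt
    (fun k : Fin (n+1) => f^[(k : ℕ)] x) (by simp)
  wlog hlt : (k : ℕ) < (l : ℕ) generalizing k l
  · exact this l k hkl.symm heq.symm (by omega)
  set a : ℕ := (k : ℕ)
  set d : ℕ := (l : ℕ) - a with hd
  have hd0 : 0 < d := by omega
  have hdn : d ≤ n := by have := l.isLt; omega
  have hper : Function.IsPeriodicPt f d (f^[a] x) := by
    have : f^[d + a] x = f^[a] x := by
      rw [show d + a = (l : ℕ) by omega]; exact heq.symm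
    simpa [Function.IsPeriodicPt, Function.IsFixedPt, Function.iterate_add_apply] using this
  have hdvd : d ∣ n.factorial := Nat.dvd_factorial hd0 hdn
  have hperN : Function.IsPeriodicPt f n.factorial (f^[a] x) := by
    obtain ⟨c, hc⟩ := hdvd
    rw [hc]; exact hper.mul_const c
  have han : a ≤ n.factorial := le_trans (by have := k.isLt; omega) (Nat.self_le_factorial n)
  have hx : f^[n.factorial] x = f^[n.factorial - a] (f^[a] x) := by
    rw [← Function.iterate_add_apply, Nat.sub_add_cancel han]
  rw [hx]
  have := hperN.apply_iterate (n.factorial - a)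
  exact this

lemma comp_it {α : Type*} (f g : α → α) (k : ℕ) (x : α) :
    (f ∘ g)^[k+1] x = f ((g ∘ f)^[k] (g x)) := by
  induction k with
  | zero => simp
  | succ k ih =>
      rw [Function.iterate_succ_apply' (f ∘ g), ih, Function.iterate_succ_apply' (g ∘ f)]
      rfl

/-- Lemma 5.1 of the paper: for self-maps `σ, τ` of a finite nonempty set
`S = {1, …, n}`, after replacing them by a common iterate `σ' = σ^s`,
`τ' = τ^s` (for some `s > 0`), there exist `i ∈ S` and `t ≥ 0` with
`σ'(i) = i`, `τ'(j) = j` for `j = τ'(i)`, and `(σ' ∘ (τ' ∘ σ')^t)(j) = i`. -/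
theorem lifting_fg (n : ℕ) (hn : 0 < n) (σ τ : Fin n → Fin n) :
    ∃ s : ℕ, 0 < s ∧ ∃ i : Fin n, ∃ t : ℕ,
      σ^[s] i = i ∧
      τ^[s] (τ^[s] i) = τ^[s] i ∧
      σ^[s] ((τ^[s] ∘ σ^[s])^[t] (τ^[s] i)) = i := by
  set s := n.factorial with hs
  have hs0 : 0 < s := Nat.factorial_pos n
  set σ' := σ^[s]
  set τ' := τ^[s]
  set h := σ' ∘ τ' with hh
  set x0 : Fin n := ⟨0, hn⟩
  set i : Fin n := h^[s] x0 with hi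
  have hidem : h^[s] i = i := iter_idem n h hn x0
  refine ⟨s, hs0, i, s - 1, ?_, ?_, ?_⟩
  · -- σ' i = i : i is in image of σ'
    have : i = σ' (τ' (h^[s-1] x0)) := by
      rw [hi, ← Nat.succ_pred_eq_of_pos hs0, Function.iterate_succ_apply' h, hh]
      rfl
    rw [this]
    exact iter_idem n σ hn _
  · exact iter_idem n τ hn _
  · have := comp_it σ' τ' (s - 1) i
    rw [show s - 1 + 1 = s by omega] at this
    show σ' ((τ' ∘ σ')^[s - 1] (τ' i)) = i
    rw [← this, ← hh, hidem]
end

section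
/- Let S = {1, …, n} be a finite nonempty set and let σ, τ : S → S be self-maps that are idempotent, i.e., σ ∘ σ = σ and τ ∘ τ = τ. Then there exist an element i ∈ S and an integer t ≥ 0 such that: (1) σ(i) = i; (2) τ(j) = j, where j = τ(i); and (3) (σ ∘ (τ ∘ σ)^t)(j) = i. -/
/-- The core combinatorial step in the proof of Lemma 5.1: for idempotent
self-maps `σ, τ` of a finite nonempty set `S = {1, …, n}`, there exist
`i ∈ S` and `t ≥ 0` such that `σ(i) = i`, `τ(j) = j` where `j = τ(i)`,
and `(σ ∘ (τ ∘ σ)^t)(j) = i`. -/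
theorem idempotent_alternating_orbit (n : ℕ) (hn : 0 < n)
    (σ τ : Fin n → Fin n) (hσ : σ ∘ σ = σ) (hτ : τ ∘ τ = τ) :
    ∃ i : Fin n, ∃ t : ℕ,
      σ i = i ∧ τ (τ i) = τ i ∧ σ ((τ ∘ σ)^[t] (τ i)) = i := by
  set g : Fin n → Fin n := τ ∘ σ with hg
  have a : Fin n := ⟨0, hn⟩
  obtain ⟨m, m', hne, heq⟩ :=
    Finite.exists_ne_map_eq_of_infinite (fun m : ℕ => g^[m] a)
  -- find periodic point
  have key : ∀ m m' : ℕ, m < m' → g^[m] a = g^[m'] a →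
      ∃ p : Fin n, ∃ k : ℕ, 1 ≤ k ∧ g^[k] p = p := by
    intro m m' hlt he
    refine ⟨g^[m] a, m' - m, by omega, ?_⟩
    rw [← Function.iterate_add_apply]
    have : m' - m + m = m' := by omega
    rw [this, ← he]
  have hper : ∃ p : Fin n, ∃ k : ℕ, 1 ≤ k ∧ g^[k] p = p := by
    rcases lt_or_gt_of_ne hne with h | h
    · exact key m m' h heq
    · exact key m' m h heq.symm
  obtain ⟨p, k, hk, hpk⟩ := hper
  refine ⟨σ p, k - 1, congrFun hσ p, congrFun hτ _, ?_⟩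
  show σ (g^[k-1] (g^[1] p)) = σ p
  rw [← Function.iterate_add_apply]
  have hk1 : k - 1 + 1 = k := by omega
  rw [hk1, hpk]
end
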